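/- arXiv:math/0506463 — 11 statements merged into one kernel-verified Lean document; each statement's English description precedes it below -/
import Mathlib

section
/- Suppose the sequent Γ, A₁∧A₂ is minimal, and Γ₁ ⊆ Γ and Γ₂ ⊆ Γ are chosen such that Γ₁, A₁ and Γ₂, A₂ are minimal. Then every formula occurrence of Γ lies in at least one of Γ₁ or Γ₂ (i.e., Γ is covered by the multiset union in the sense that Γ ⊆ Γ₁ + Γ₂ as multisets can be arranged: there exist Σ, Δ₁, Δ₂ with Γ = Σ,Δ₁,Δ₂, Γ₁ = Σ,Δ₁, Γ₂ = Σ,Δ₂). -/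
/-- Propositional formulas in negation normal form. -/
inductive Fm : Type
  | pos : ℕ → Fm
  | neg : ℕ → Fm
  | conj : Fm → Fm → Fm
  | disj : Fm → Fm → Fm
  deriving DecidableEq

/-- Boolean evaluation of a formula under a valuation. -/
def Fm.eval (v : ℕ → Bool) : Fm → Bool
  | .pos p => v p
  | .neg p => !(v p)
  | .conj a b => a.eval v && b.eval v
  | .disj a b => a.eval v || b.eval v

/-- A sequent (nonempty multiset of formulas) is valid if under every
valuation some member is true (i.e. the disjunction is a tautology). -/
def Valid (Γ : Multiset Fm) : Prop :=
  Γ ≠ 0 ∧ ∀ v : ℕ → Bool, ∃ A ∈ Γ, Fm.eval v A = true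

/-- A sequent is minimal if it is valid and no proper sub-multiset is valid. -/
def MinimalSeq (Γ : Multiset Fm) : Prop :=
  Valid Γ ∧ ∀ Δ : Multiset Fm, Δ < Γ → ¬ Valid Δ

/-! The minimality of `Γ, A₁ ∧ A₂` forces `Γ = Γ₁ ∪ Γ₂`: by weakening and the ∧-rule, the
sequent `Γ₁ ∪ Γ₂, A₁ ∧ A₂` is valid, and it is a sub-multiset of `Γ, A₁ ∧ A₂`. The
decomposition is then `Σ = Γ₁ ∩ Γ₂`, `Δ₁ = Γ₁ - Γ₂`, `Δ₂ = Γ₂ - Γ₁`. -/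

theorem Multiset.union_eq_inter_add_sub_add_sub {α : Type*} [DecidableEq α]
    (s t : Multiset α) : s ∪ t = s ∩ t + (s - t) + (t - s) := by
  ext a
  simp only [count_union, count_add, count_inter, count_sub]
  omega

theorem Valid.mono {Γ Δ : Multiset Fm} (hΓ : Valid Γ) (hle : Γ ≤ Δ) : Valid Δ := by
  refine ⟨fun h => hΓ.1 (Multiset.le_zero.mp (h ▸ hle)), fun v => ?_⟩
  obtain ⟨A, hA, hAv⟩ := hΓ.2 v
  exact ⟨A, Multiset.mem_of_le hle hA, hAv⟩

theorem Valid.exists_mem_eval_of_eval_eq_false {Γ : Multiset Fm} {A : Fm} (hA : Valid (Γ + {A}))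
    {v : ℕ → Bool} (hAv : A.eval v = false) : ∃ C ∈ Γ, C.eval v = true := by
  obtain ⟨C, hC, hCv⟩ := hA.2 v
  rcases Multiset.mem_add.mp hC with hC | hC
  · exact ⟨C, hC, hCv⟩
  · rw [Multiset.mem_singleton.mp hC, hAv] at hCv
    exact absurd hCv Bool.false_ne_true

theorem Valid.conj {Γ : Multiset Fm} {A B : Fm} (hA : Valid (Γ + {A})) (hB : Valid (Γ + {B})) :
    Valid (Γ + {Fm.conj A B}) := by
  refine ⟨by simp, fun v => ?_⟩
  have from_Γ : (∃ C ∈ Γ, C.eval v = true) → ∃ C ∈ Γ + {Fm.conj A B}, C.eval v = true :=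
    fun ⟨C, hC, hCv⟩ => ⟨C, Multiset.mem_add.mpr (Or.inl hC), hCv⟩
  cases hAv : A.eval v
  · exact from_Γ (hA.exists_mem_eval_of_eval_eq_false hAv)
  cases hBv : B.eval v
  · exact from_Γ (hB.exists_mem_eval_of_eval_eq_false hBv)
  exact ⟨Fm.conj A B, by simp, by simp [Fm.eval, hAv, hBv]⟩

theorem MinimalSeq.eq_of_le_of_valid {Γ Δ : Multiset Fm} (hΓ : MinimalSeq Γ) (hle : Δ ≤ Γ)
    (hΔ : Valid Δ) : Δ = Γ :=
  hle.eq_of_not_lt fun hlt => hΓ.2 Δ hlt hΔ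

theorem stmt_3 (Γ Γ₁ Γ₂ : Multiset Fm) (A₁ A₂ : Fm)
    (hmin : MinimalSeq (Γ + {Fm.conj A₁ A₂}))
    (h₁ : Γ₁ ≤ Γ) (h₂ : Γ₂ ≤ Γ)
    (hmin₁ : MinimalSeq (Γ₁ + {A₁})) (hmin₂ : MinimalSeq (Γ₂ + {A₂})) :
    ∃ S Δ₁ Δ₂ : Multiset Fm, Γ = S + Δ₁ + Δ₂ ∧ Γ₁ = S + Δ₁ ∧ Γ₂ = S + Δ₂ := by
  have hvalid : Valid (Γ₁ ∪ Γ₂ + {Fm.conj A₁ A₂}) :=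
    (hmin₁.1.mono (add_le_add_left Multiset.le_union_left _)).conj
      (hmin₂.1.mono (add_le_add_left Multiset.le_union_right _))
  have hcover : Γ₁ ∪ Γ₂ = Γ := add_right_cancel <|
    hmin.eq_of_le_of_valid (add_le_add_left (Multiset.union_le h₁ h₂) _) hvalid
  refine ⟨Γ₁ ∩ Γ₂, Γ₁ - Γ₂, Γ₂ - Γ₁, ?_, ?_, ?_⟩
  · rw [← hcover, Multiset.union_eq_inter_add_sub_add_sub]
  · rw [add_comm, Multiset.sub_add_inter]
  · rw [Multiset.inter_comm, add_comm, Multiset.sub_add_inter]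
end

section
/- If the sequent Γ, A∨B is minimal and the sequent Γ, A is valid, then Γ, A is minimal. -/
/-! A proper sub-multiset of `Γ, A` either omits `A`, and then lies below `Γ`, a proper
sub-multiset of `Γ, A ∨ B`; or it is `Δ, A` with `Δ < Γ`, and then `Δ, A ∨ B` is a valid proper
sub-multiset of `Γ, A ∨ B`, since `A ∨ B` holds wherever `A` does. -/

theorem Multiset.le_or_exists_lt_of_lt_add_singleton {α : Type*} {Δ Γ : Multiset α} {a : α}
    (h : Δ < Γ + {a}) : Δ ≤ Γ ∨ ∃ Δ' < Γ, Δ = Δ' + {a} := by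
  by_cases ha : a ∈ Δ
  · obtain ⟨Δ', rfl⟩ := Multiset.exists_cons_of_mem ha
    rw [← Multiset.singleton_add, add_comm] at h ⊢
    exact .inr ⟨Δ', lt_of_add_lt_add_right h, rfl⟩
  · rw [add_comm, Multiset.singleton_add] at h
    exact .inl ((Multiset.le_cons_of_notMem ha).mp h.le)

theorem Valid.add_singleton_disj {Δ : Multiset Fm} {A : Fm} (B : Fm) (h : Valid (Δ + {A})) :
    Valid (Δ + {Fm.disj A B}) := by
  refine ⟨by simp, fun v => ?_⟩
  obtain ⟨C, hC, hCv⟩ := h.2 v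
  rcases Multiset.mem_add.mp hC with hCΔ | hCA
  · exact ⟨C, Multiset.mem_add.mpr (.inl hCΔ), hCv⟩
  · rw [Multiset.mem_singleton.mp hCA] at hCv
    exact ⟨Fm.disj A B, by simp, by simp [Fm.eval, hCv]⟩

theorem stmt_4 (Γ : Multiset Fm) (A B : Fm)
    (hmin : MinimalSeq (Γ + {Fm.disj A B})) (hval : Valid (Γ + {A})) :
    MinimalSeq (Γ + {A}) := by
  refine ⟨hval, fun Δ hΔ hΔv => ?_⟩
  rcases Multiset.le_or_exists_lt_of_lt_add_singleton hΔ with hle | ⟨Δ', hlt, rfl⟩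
  · exact hmin.2 Δ (hle.trans_lt (lt_add_of_pos_right Γ (by simp))) hΔv
  · exact hmin.2 _ (add_lt_add_left hlt _) (hΔv.add_singleton_disj B)
end

section
/- Every minimal sequent is derivable in the system Mp, whose rules are: axiom P, ¬P for any propositional variable P; blended conjunction: from Γ,Δ,A and Γ,Σ,B derive Γ,Δ,Σ,A∧B; par: from Γ,A,B derive Γ,A∨B; and plus: from Γ,Aᵢ derive Γ,A₁∨A₂ (i = 1,2). -/
/-- Derivability in minimal sequent calculus Mp. -/
inductive Mp : Multiset Fm → Prop
  | ax (P : ℕ) : Mp {Fm.pos P, Fm.neg P}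
  | blend {Γ Δ S : Multiset Fm} {A B : Fm} :
      Mp (Γ + Δ + {A}) → Mp (Γ + S + {B}) → Mp (Γ + Δ + S + {Fm.conj A B})
  | par {Γ : Multiset Fm} {A B : Fm} :
      Mp (Γ + {A, B}) → Mp (Γ + {Fm.disj A B})
  | plus1 {Γ : Multiset Fm} {A B : Fm} :
      Mp (Γ + {A}) → Mp (Γ + {Fm.disj A B})
  | plus2 {Γ : Multiset Fm} {A B : Fm} :
      Mp (Γ + {B}) → Mp (Γ + {Fm.disj A B})

/-!
A minimal sequent containing a complementary pair `P, ¬P` is that axiom. Otherwise it has a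
compound member, and we recurse on its total size, reading the premises of the last rule off
minimality. If `Γ, A ∧ B` is minimal, then `Γ, A` and `Γ, B` are valid, and minimal sub-sequents
of them have the form `Γ_A, A` and `Γ_B, B`, since a valid sub-sequent of `Γ` would contradict
minimality. As `Γ_A ∪ Γ_B, A ∧ B` is again valid, minimality forces `Γ_A ∪ Γ_B = Γ`, which is the
shape of a conclusion of the blended conjunction rule with shared context `Γ_A ∩ Γ_B`.
If `Γ, A ∨ B` is minimal, a minimal sub-sequent `Θ, N` of the valid `Γ, A, B` with `N ≤ {A, B}`
makes `Θ, A ∨ B` valid, so `Θ = Γ`; and `N` is one of `A`, `B`, or `A, B`, a premise of plus or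
par.
-/

def Fm.size : Fm → ℕ
  | .pos _ | .neg _ => 1
  | .conj a b | .disj a b => a.size + b.size + 1

def seqSize (Γ : Multiset Fm) : ℕ := (Γ.map Fm.size).sum

@[simp] lemma seqSize_add (Γ Δ : Multiset Fm) : seqSize (Γ + Δ) = seqSize Γ + seqSize Δ := by
  simp [seqSize]

@[simp] lemma seqSize_singleton (A : Fm) : seqSize {A} = A.size := by
  simp [seqSize]

lemma seqSize_mono {Γ Δ : Multiset Fm} (h : Γ ≤ Δ) : seqSize Γ ≤ seqSize Δ := by
  obtain ⟨Θ, rfl⟩ := Multiset.le_iff_exists_add.mp h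
  simp

section Valid

variable {Γ M N : Multiset Fm} {A : Fm}

lemma valid_pos_neg (p : ℕ) : Valid {Fm.pos p, Fm.neg p} := by
  refine ⟨by simp, fun v => ?_⟩
  cases hv : v p
  · exact ⟨Fm.neg p, by simp, by simp [Fm.eval, hv]⟩
  · exact ⟨Fm.pos p, by simp, by simp [Fm.eval, hv]⟩

lemma Valid.add_of_forall_imp (hv : Valid (Γ + M)) (hN : N ≠ 0)
    (h : ∀ v, ∀ A ∈ M, A.eval v = true → ∃ B ∈ N, B.eval v = true) : Valid (Γ + N) := by
  refine ⟨by simp [hN], fun v => ?_⟩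
  obtain ⟨A, hA, hAv⟩ := hv.2 v
  rcases Multiset.mem_add.mp hA with hA | hA
  · exact ⟨A, Multiset.mem_add.mpr (Or.inl hA), hAv⟩
  · obtain ⟨B, hB, hBv⟩ := h v A hA hAv
    exact ⟨B, Multiset.mem_add.mpr (Or.inr hB), hBv⟩

lemma Valid.exists_eval_of_eval_eq_false (hv : Valid (Γ + {A})) {v : ℕ → Bool}
    (hA : A.eval v = false) : ∃ B ∈ Γ, B.eval v = true := by
  obtain ⟨B, hB, hBv⟩ := hv.2 v
  rcases Multiset.mem_add.mp hB with hB | hB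
  · exact ⟨B, hB, hBv⟩
  · simp_all

lemma Valid.exists_minimalSeq_le (hv : Valid Γ) : ∃ Δ ≤ Γ, MinimalSeq Δ := by
  induction Γ using WellFoundedLT.induction with
  | _ Γ ih =>
    by_cases hmin : ∀ Δ < Γ, ¬ Valid Δ
    · exact ⟨Γ, le_rfl, hv, hmin⟩
    · push Not at hmin
      obtain ⟨Δ, hlt, hΔ⟩ := hmin
      obtain ⟨Θ, hle, hΘ⟩ := ih Δ hlt hΔ
      exact ⟨Θ, hle.trans hlt.le, hΘ⟩

/-- The valuation making exactly the negative literals of `Γ` true falsifies every literal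
of `Γ` unless `Γ` contains a complementary pair. -/
lemma Valid.exists_compound (hv : Valid Γ) (hlit : ∀ p, Fm.pos p ∈ Γ → Fm.neg p ∉ Γ) :
    ∃ Γ' A B, Γ = Γ' + {Fm.conj A B} ∨ Γ = Γ' + {Fm.disj A B} := by
  classical
  obtain ⟨X, hX, hXv⟩ := hv.2 fun p => decide (Fm.pos p ∉ Γ)
  have hΓ : Γ = Γ.erase X + {X} := by
    rw [Multiset.add_comm, Multiset.singleton_add, Multiset.cons_erase hX]
  cases X with
  | pos p => simp [Fm.eval, hX] at hXv
  | neg p =>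
    simp only [Fm.eval, decide_not, Bool.not_not, decide_eq_true_eq] at hXv
    exact absurd hX (hlit p hXv)
  | conj A B => exact ⟨_, A, B, Or.inl hΓ⟩
  | disj A B => exact ⟨_, A, B, Or.inr hΓ⟩

end Valid

namespace MinimalSeq

variable {Γ Δ M : Multiset Fm} {A B X : Fm}

lemma eq_of_le (h : MinimalSeq Γ) (hle : Δ ≤ Γ) (hv : Valid Δ) : Δ = Γ :=
  hle.eq_or_lt.resolve_right fun hlt => h.2 Δ hlt hv

lemma exists_minimalSeq_add (h : MinimalSeq (Γ + {X})) (hv : Valid (Γ + M)) :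
    ∃ Θ ≤ Γ, ∃ N ≤ M, N ≠ 0 ∧ MinimalSeq (Θ + N) := by
  obtain ⟨Δ, hle, hΔ⟩ := hv.exists_minimalSeq_le
  refine ⟨Δ ∩ Γ, Multiset.inter_le_right, Δ - Γ, tsub_le_iff_left.mpr hle, fun h0 => ?_, ?_⟩
  · have hΔΓ : Δ ≤ Γ := by simpa [h0] using (Multiset.sub_add_inter Δ Γ).symm.le
    exact h.2 Δ (hΔΓ.trans_lt (lt_add_of_pos_right Γ (by simp))) hΔ.1
  · rwa [add_comm, Multiset.sub_add_inter]

lemma exists_conj_premises (h : MinimalSeq (Γ + {Fm.conj A B})) :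
    ∃ ΓA ΓB, ΓA ∪ ΓB = Γ ∧ MinimalSeq (ΓA + {A}) ∧ MinimalSeq (ΓB + {B}) := by
  have premise : ∀ C, (∀ v, (Fm.conj A B).eval v = true → C.eval v = true) →
      ∃ Θ ≤ Γ, MinimalSeq (Θ + {C}) := by
    intro C hC
    have hv : Valid (Γ + {C}) := h.1.add_of_forall_imp (by simp) fun v Y hY hYv => by
      rw [Multiset.mem_singleton.mp hY] at hYv
      exact ⟨C, Multiset.mem_singleton_self C, hC v hYv⟩
    obtain ⟨Θ, hΘ, N, hN, hN0, hmin⟩ := h.exists_minimalSeq_add hv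
    obtain rfl : N = {C} := (Multiset.le_singleton.mp hN).resolve_left hN0
    exact ⟨Θ, hΘ, hmin⟩
  obtain ⟨ΓA, hΓA, hA⟩ := premise A fun v hv => by simp_all [Fm.eval]
  obtain ⟨ΓB, hΓB, hB⟩ := premise B fun v hv => by simp_all [Fm.eval]
  have hunion : Valid (ΓA ∪ ΓB + {Fm.conj A B}) := by
    refine ⟨by simp, fun v => ?_⟩
    cases hAv : A.eval v
    · obtain ⟨Y, hY, hYv⟩ := hA.1.exists_eval_of_eval_eq_false hAv
      exact ⟨Y, by simp [Multiset.mem_union, hY], hYv⟩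
    cases hBv : B.eval v
    · obtain ⟨Y, hY, hYv⟩ := hB.1.exists_eval_of_eval_eq_false hBv
      exact ⟨Y, by simp [Multiset.mem_union, hY], hYv⟩
    exact ⟨Fm.conj A B, by simp, by simp [Fm.eval, hAv, hBv]⟩
  refine ⟨ΓA, ΓB, ?_, hA, hB⟩
  exact add_right_cancel (h.eq_of_le (by gcongr; exact Multiset.union_le hΓA hΓB) hunion)

lemma disj_premise (h : MinimalSeq (Γ + {Fm.disj A B})) :
    MinimalSeq (Γ + {A}) ∨ MinimalSeq (Γ + {B}) ∨ MinimalSeq (Γ + {A, B}) := by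
  have hv : Valid (Γ + {A, B}) := h.1.add_of_forall_imp (by simp) fun v Y hY hYv => by
    rw [Multiset.mem_singleton.mp hY] at hYv
    rcases Bool.or_eq_true_iff.mp hYv with hAv | hBv
    · exact ⟨A, by simp, hAv⟩
    · exact ⟨B, by simp, hBv⟩
  obtain ⟨Θ, hΘ, N, hN, hN0, hmin⟩ := h.exists_minimalSeq_add hv
  have hdisj : Valid (Θ + {Fm.disj A B}) := hmin.1.add_of_forall_imp (by simp) fun v Y hY hYv => by
    refine ⟨Fm.disj A B, Multiset.mem_singleton_self _, ?_⟩
    rcases (by simpa using Multiset.mem_of_le hN hY : Y = A ∨ Y = B) with rfl | rfl <;>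
      simp [Fm.eval, hYv]
  obtain rfl : Θ = Γ := add_right_cancel (h.eq_of_le (by gcongr) hdisj)
  rw [← Multiset.mem_powerset] at hN
  simp only [Multiset.insert_eq_cons, Multiset.powerset_cons, Multiset.mem_add,
    Multiset.mem_powerset, Multiset.le_singleton, Multiset.mem_map, exists_eq_or_imp,
    Multiset.cons_zero, existsAndEq, true_and] at hN
  rcases hN with (rfl | rfl) | rfl | rfl
  · exact absurd rfl hN0
  · exact Or.inr (Or.inl hmin)
  · exact Or.inl hmin
  · exact Or.inr (Or.inr hmin)

end MinimalSeq

lemma Mp.blend_union {Γ Δ : Multiset Fm} {A B : Fm} (hA : Mp (Γ + {A})) (hB : Mp (Δ + {B})) :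
    Mp (Γ ∪ Δ + {Fm.conj A B}) := by
  have hunion : Γ ∪ Δ = Γ ∩ Δ + (Γ - Δ) + (Δ - Γ) := by
    ext X
    simp only [Multiset.count_union, Multiset.count_add, Multiset.count_inter, Multiset.count_sub]
    omega
  rw [hunion]
  refine Mp.blend ?_ ?_
  · rwa [add_comm (Γ ∩ Δ), Multiset.sub_add_inter]
  · rwa [add_comm (Γ ∩ Δ), Multiset.inter_comm, Multiset.sub_add_inter]

theorem stmt_6 (Γ : Multiset Fm) (h : MinimalSeq Γ) : Mp Γ := by
  by_cases hcompl : ∃ p, Fm.pos p ∈ Γ ∧ Fm.neg p ∈ Γ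
  · obtain ⟨p, hp, hn⟩ := hcompl
    have hle : {Fm.pos p, Fm.neg p} ≤ Γ := Multiset.cons_erase hp ▸ Multiset.cons_le_cons _
      (Multiset.singleton_le.mpr ((Multiset.mem_erase_of_ne (by simp)).mpr hn))
    rw [← h.eq_of_le hle (valid_pos_neg p)]
    exact Mp.ax p
  · obtain ⟨Γ', A, B, rfl | rfl⟩ := h.1.exists_compound (by simpa using hcompl)
    · obtain ⟨ΓA, ΓB, rfl, hA, hB⟩ := h.exists_conj_premises
      exact Mp.blend_union (stmt_6 _ hA) (stmt_6 _ hB)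
    · rcases h.disj_premise with h' | h' | h'
      · exact Mp.plus1 (stmt_6 _ h')
      · exact Mp.plus2 (stmt_6 _ h')
      · exact Mp.par (stmt_6 _ h')
termination_by seqSize Γ
decreasing_by
  all_goals subst_vars
  · have := seqSize_mono (Multiset.le_union_left (s := ΓA) (t := ΓB))
    simp only [seqSize_add, seqSize_singleton, Fm.size]; omega
  · have := seqSize_mono (Multiset.le_union_right (s := ΓA) (t := ΓB))
    simp only [seqSize_add, seqSize_singleton, Fm.size]; omega
  all_goals simp [Fm.size, ← Multiset.singleton_add]
end

section
/- The system Mp⁻ is incomplete: the valid formula ((P∧Q)∨(¬Q∧P))∨¬P, where P and Q are distinct propositional variables, is not derivable in Mp⁻. -/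
/-- Derivability in system Mp⁻ (both standard conjunction rules, par, plus). -/
inductive MpMinus : Multiset Fm → Prop
  | ax (P : ℕ) : MpMinus {Fm.pos P, Fm.neg P}
  | withR {Γ : Multiset Fm} {A B : Fm} :
      MpMinus (Γ + {A}) → MpMinus (Γ + {B}) → MpMinus (Γ + {Fm.conj A B})
  | tensor {Δ S : Multiset Fm} {A B : Fm} :
      MpMinus (Δ + {A}) → MpMinus (S + {B}) → MpMinus (Δ + S + {Fm.conj A B})
  | par {Γ : Multiset Fm} {A B : Fm} :
      MpMinus (Γ + {A, B}) → MpMinus (Γ + {Fm.disj A B})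
  | plus1 {Γ : Multiset Fm} {A B : Fm} :
      MpMinus (Γ + {A}) → MpMinus (Γ + {Fm.disj A B})
  | plus2 {Γ : Multiset Fm} {A B : Fm} :
      MpMinus (Γ + {B}) → MpMinus (Γ + {Fm.disj A B})

namespace Stmt10Aux

/-- Soundness of Mp⁻. -/
lemma sound {Γ : Multiset Fm} (h : MpMinus Γ) : Valid Γ := by
  induction h with
  | ax p =>
      refine ⟨by simp, fun v => ?_⟩
      by_cases hv : v p = true
      · exact ⟨Fm.pos p, by simp, by simp [Fm.eval, hv]⟩
      · exact ⟨Fm.neg p, by simp, by simp [Fm.eval]; simpa using hv⟩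
  | @withR G X Y h1 h2 ih1 ih2 =>
      refine ⟨by simp, fun v => ?_⟩
      obtain ⟨A1, hA1, he1⟩ := ih1.2 v
      rcases Multiset.mem_add.mp hA1 with hA1 | hA1
      · exact ⟨A1, by simp [Multiset.mem_add, hA1], he1⟩
      · obtain ⟨B1, hB1, he2⟩ := ih2.2 v
        rcases Multiset.mem_add.mp hB1 with hB1 | hB1
        · exact ⟨B1, by simp [Multiset.mem_add, hB1], he2⟩
        · simp at hA1 hB1
          rw [hA1] at he1; rw [hB1] at he2
          exact ⟨Fm.conj X Y, by simp, by simp [Fm.eval, he1, he2]⟩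
  | @tensor D E X Y h1 h2 ih1 ih2 =>
      refine ⟨by simp, fun v => ?_⟩
      obtain ⟨A1, hA1, he1⟩ := ih1.2 v
      rcases Multiset.mem_add.mp hA1 with hA1 | hA1
      · exact ⟨A1, by simp [Multiset.mem_add, hA1], he1⟩
      · obtain ⟨B1, hB1, he2⟩ := ih2.2 v
        rcases Multiset.mem_add.mp hB1 with hB1 | hB1
        · exact ⟨B1, by simp [Multiset.mem_add, hB1], he2⟩
        · simp at hA1 hB1
          rw [hA1] at he1; rw [hB1] at he2
          exact ⟨Fm.conj X Y, by simp, by simp [Fm.eval, he1, he2]⟩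
  | @par G X Y h1 ih1 =>
      refine ⟨by simp, fun v => ?_⟩
      obtain ⟨A1, hA1, he1⟩ := ih1.2 v
      rcases Multiset.mem_add.mp hA1 with hA1 | hA1
      · exact ⟨A1, by simp [Multiset.mem_add, hA1], he1⟩
      · simp at hA1
        rcases hA1 with h | h <;> rw [h] at he1
        · exact ⟨Fm.disj X Y, by simp, by simp [Fm.eval, he1]⟩
        · exact ⟨Fm.disj X Y, by simp, by simp [Fm.eval, he1]⟩
  | @plus1 G X Y h1 ih1 =>
      refine ⟨by simp, fun v => ?_⟩
      obtain ⟨A1, hA1, he1⟩ := ih1.2 v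
      rcases Multiset.mem_add.mp hA1 with hA1 | hA1
      · exact ⟨A1, by simp [Multiset.mem_add, hA1], he1⟩
      · simp at hA1; rw [hA1] at he1
        exact ⟨Fm.disj X Y, by simp, by simp [Fm.eval, he1]⟩
  | @plus2 G X Y h1 ih1 =>
      refine ⟨by simp, fun v => ?_⟩
      obtain ⟨A1, hA1, he1⟩ := ih1.2 v
      rcases Multiset.mem_add.mp hA1 with hA1 | hA1
      · exact ⟨A1, by simp [Multiset.mem_add, hA1], he1⟩
      · simp at hA1; rw [hA1] at he1
        exact ⟨Fm.disj X Y, by simp, by simp [Fm.eval, he1]⟩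

/-- Refutation by countermodel. -/
lemma refute {Γ : Multiset Fm} (v : ℕ → Bool) (hv : ∀ A ∈ Γ, Fm.eval v A = false)
    (h : MpMinus Γ) : False := by
  obtain ⟨-, h2⟩ := sound h
  obtain ⟨A, hA, he⟩ := h2 v
  rw [hv A hA] at he
  cases he

def IsLit : Fm → Prop
  | .pos _ => True
  | .neg _ => True
  | .conj _ _ => False
  | .disj _ _ => False

/-- A derivable sequent of literals is an axiom. -/
lemma atomic_shape {Γ : Multiset Fm} (h : MpMinus Γ) (hl : ∀ A ∈ Γ, IsLit A) :
    ∃ p, Γ = {Fm.pos p, Fm.neg p} := by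
  cases h with
  | ax p => exact ⟨p, rfl⟩
  | @withR G X Y h1 h2 =>
      have := hl (Fm.conj X Y) (by simp)
      simp [IsLit] at this
  | @tensor D E X Y h1 h2 =>
      have := hl (Fm.conj X Y) (by simp)
      simp [IsLit] at this
  | @par G X Y h1 =>
      have := hl (Fm.disj X Y) (by simp)
      simp [IsLit] at this
  | @plus1 G X Y h1 =>
      have := hl (Fm.disj X Y) (by simp)
      simp [IsLit] at this
  | @plus2 G X Y h1 =>
      have := hl (Fm.disj X Y) (by simp)
      simp [IsLit] at this

lemma refute_atomic3 {a b c : Fm} (h : MpMinus (({a, b} : Multiset Fm) + {c}))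
    (ha : IsLit a) (hb : IsLit b) (hc : IsLit c) : False := by
  obtain ⟨p, hp⟩ := atomic_shape h (by
    intro A hA
    simp at hA
    rcases hA with rfl | rfl | rfl <;> assumption)
  have := congrArg Multiset.card hp
  simp at this

lemma add_eq_cons {a : Fm} {Δ S T : Multiset Fm} (h : Δ + S = a ::ₘ T) :
    (∃ Δ', Δ = a ::ₘ Δ' ∧ Δ' + S = T) ∨ (∃ S', S = a ::ₘ S' ∧ Δ + S' = T) := by
  have ha : a ∈ Δ + S := h ▸ Multiset.mem_cons_self a T
  rcases Multiset.mem_add.mp ha with h1 | h1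
  · left
    refine ⟨Δ.erase a, (Multiset.cons_erase h1).symm, ?_⟩
    have h2 : a ::ₘ (Δ.erase a + S) = a ::ₘ T := by
      rw [← Multiset.cons_add, Multiset.cons_erase h1, h]
    exact (Multiset.cons_inj_right a).mp h2
  · right
    refine ⟨S.erase a, (Multiset.cons_erase h1).symm, ?_⟩
    have h2 : a ::ₘ (Δ + S.erase a) = a ::ₘ T := by
      rw [← h]
      conv_rhs => rw [← Multiset.cons_erase h1]
      rw [← Multiset.singleton_add, ← Multiset.singleton_add, add_left_comm]
    exact (Multiset.cons_inj_right a).mp h2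

lemma add_singleton_eq_cons {Γ T : Multiset Fm} {X a : Fm} (h : Γ + {X} = a ::ₘ T) :
    (X = a ∧ Γ = T) ∨ (∃ Γ', Γ = a ::ₘ Γ' ∧ Γ' + {X} = T) := by
  rcases add_eq_cons h with ⟨Γ', h1, h2⟩ | ⟨S', h1, h2⟩
  · right; exact ⟨Γ', h1, h2⟩
  · left
    rw [Multiset.singleton_eq_cons_iff] at h1
    obtain ⟨rfl, rfl⟩ := h1
    simpa using h2

lemma decomp1 {Γ : Multiset Fm} {X a : Fm} (h : Γ + {X} = {a}) :
    X = a ∧ Γ = 0 := by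
  rcases add_singleton_eq_cons h with ⟨h1, h2⟩ | ⟨Γ', h1, h2⟩
  · exact ⟨h1, h2⟩
  · exfalso; simp at h2

lemma decomp2 {Γ : Multiset Fm} {X a b : Fm} (h : Γ + {X} = {a, b}) :
    (X = a ∧ Γ = {b}) ∨ (X = b ∧ Γ = {a}) := by
  rcases add_singleton_eq_cons h with ⟨h1, h2⟩ | ⟨Γ', h1, h2⟩
  · exact Or.inl ⟨h1, h2⟩
  · obtain ⟨h3, h4⟩ := decomp1 h2
    subst h4
    exact Or.inr ⟨h3, h1⟩

lemma decomp3 {Γ : Multiset Fm} {X a b c : Fm} (h : Γ + {X} = {a, b, c}) :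
    (X = a ∧ Γ = {b, c}) ∨ (X = b ∧ Γ = {a, c}) ∨ (X = c ∧ Γ = {a, b}) := by
  rcases add_singleton_eq_cons h with ⟨h1, h2⟩ | ⟨Γ', h1, h2⟩
  · exact Or.inl ⟨h1, h2⟩
  · rcases decomp2 h2 with ⟨h3, h4⟩ | ⟨h3, h4⟩ <;> subst h4
    · exact Or.inr (Or.inl ⟨h3, h1⟩)
    · exact Or.inr (Or.inr ⟨h3, h1⟩)

lemma split2 {Δ S : Multiset Fm} {a b : Fm} (h : Δ + S = {a, b}) :
    (Δ = 0 ∧ S = {a, b}) ∨ (Δ = {a} ∧ S = {b}) ∨ (Δ = {b} ∧ S = {a}) ∨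
      (Δ = {a, b} ∧ S = 0) := by
  rcases add_eq_cons h with ⟨Δ', h1, h2⟩ | ⟨S', h1, h2⟩
  · rcases add_eq_cons h2 with ⟨Δ'', h3, h4⟩ | ⟨S'', h3, h4⟩
    · simp at h4
      obtain ⟨rfl, rfl⟩ := h4
      subst h3; subst h1
      exact Or.inr (Or.inr (Or.inr ⟨rfl, rfl⟩))
    · simp at h4
      obtain ⟨rfl, rfl⟩ := h4
      subst h3; subst h1
      exact Or.inr (Or.inl ⟨rfl, rfl⟩)
  · rcases add_eq_cons h2 with ⟨Δ'', h3, h4⟩ | ⟨S'', h3, h4⟩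
    · simp at h4
      obtain ⟨rfl, rfl⟩ := h4
      subst h3; subst h1
      exact Or.inr (Or.inr (Or.inl ⟨rfl, rfl⟩))
    · simp at h4
      obtain ⟨rfl, rfl⟩ := h4
      subst h3; subst h1
      exact Or.inl ⟨rfl, rfl⟩

section Main

variable {P Q : ℕ}

/-- ¬⊢ {¬P, P∧Q, P} -/
lemma notB2 (hPQ : P ≠ Q)
    (h : MpMinus {Fm.neg P, Fm.conj (Fm.pos P) (Fm.pos Q), Fm.pos P}) : False := by
  generalize hE : ({Fm.neg P, Fm.conj (Fm.pos P) (Fm.pos Q), Fm.pos P} : Multiset Fm) = T at h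
  cases h with
  | ax p =>
      have : Fm.conj (Fm.pos P) (Fm.pos Q) ∈ ({Fm.pos p, Fm.neg p} : Multiset Fm) := by
        rw [← hE]; simp
      simp at this
  | @withR Γ A B h1 h2 =>
      rcases decomp3 hE.symm with ⟨hX, hΓ⟩ | ⟨hX, hΓ⟩ | ⟨hX, hΓ⟩
      · simp at hX
      · injection hX with e1 e2; subst e1; subst e2; subst hΓ
        exact refute_atomic3 h2 trivial trivial trivial
      · simp at hX
  | @tensor Δ S A B h1 h2 =>
      rcases decomp3 hE.symm with ⟨hX, hDS⟩ | ⟨hX, hDS⟩ | ⟨hX, hDS⟩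
      · simp at hX
      · injection hX with e1 e2; subst e1; subst e2
        rcases split2 hDS with ⟨hΔ, hS⟩ | ⟨hΔ, hS⟩ | ⟨hΔ, hS⟩ | ⟨hΔ, hS⟩ <;> subst hS
        · exact refute_atomic3 h2 trivial trivial trivial
        · refine refute (fun _ => false) ?_ h2
          intro A hA; simp at hA
          rcases hA with rfl | rfl <;> simp [Fm.eval]
        · refine refute (fun n => decide (n = P)) ?_ h2
          intro A hA; simp at hA
          rcases hA with rfl | rfl <;> simp [Fm.eval, Ne.symm hPQ]
        · refine refute (fun _ => false) ?_ h2
          intro A hA; simp at hA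
          subst hA; simp [Fm.eval]
      · simp at hX
  | @par Γ A B h1 =>
      rcases decomp3 hE.symm with ⟨hX, hΓ⟩ | ⟨hX, hΓ⟩ | ⟨hX, hΓ⟩ <;> simp at hX
  | @plus1 Γ A B h1 =>
      rcases decomp3 hE.symm with ⟨hX, hΓ⟩ | ⟨hX, hΓ⟩ | ⟨hX, hΓ⟩ <;> simp at hX
  | @plus2 Γ A B h1 =>
      rcases decomp3 hE.symm with ⟨hX, hΓ⟩ | ⟨hX, hΓ⟩ | ⟨hX, hΓ⟩ <;> simp at hX

/-- ¬⊢ {¬P, ¬Q∧P, P} -/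
lemma notA1 (hPQ : P ≠ Q)
    (h : MpMinus {Fm.neg P, Fm.conj (Fm.neg Q) (Fm.pos P), Fm.pos P}) : False := by
  generalize hE : ({Fm.neg P, Fm.conj (Fm.neg Q) (Fm.pos P), Fm.pos P} : Multiset Fm) = T at h
  cases h with
  | ax p =>
      have : Fm.conj (Fm.neg Q) (Fm.pos P) ∈ ({Fm.pos p, Fm.neg p} : Multiset Fm) := by
        rw [← hE]; simp
      simp at this
  | @withR Γ A B h1 h2 =>
      rcases decomp3 hE.symm with ⟨hX, hΓ⟩ | ⟨hX, hΓ⟩ | ⟨hX, hΓ⟩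
      · simp at hX
      · injection hX with e1 e2; subst e1; subst e2; subst hΓ
        exact refute_atomic3 h1 trivial trivial trivial
      · simp at hX
  | @tensor Δ S A B h1 h2 =>
      rcases decomp3 hE.symm with ⟨hX, hDS⟩ | ⟨hX, hDS⟩ | ⟨hX, hDS⟩
      · simp at hX
      · injection hX with e1 e2; subst e1; subst e2
        rcases split2 hDS with ⟨hΔ, hS⟩ | ⟨hΔ, hS⟩ | ⟨hΔ, hS⟩ | ⟨hΔ, hS⟩ <;> subst hΔ
        · refine refute (fun _ => true) ?_ h1
          intro A hA; simp at hA
          subst hA; simp [Fm.eval]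
        · refine refute (fun _ => true) ?_ h1
          intro A hA; simp at hA
          rcases hA with rfl | rfl <;> simp [Fm.eval]
        · refine refute (fun n => decide (n = Q)) ?_ h1
          intro A hA; simp at hA
          rcases hA with rfl | rfl <;> simp [Fm.eval, hPQ]
        · exact refute_atomic3 h1 trivial trivial trivial
      · simp at hX
  | @par Γ A B h1 =>
      rcases decomp3 hE.symm with ⟨hX, hΓ⟩ | ⟨hX, hΓ⟩ | ⟨hX, hΓ⟩ <;> simp at hX
  | @plus1 Γ A B h1 =>
      rcases decomp3 hE.symm with ⟨hX, hΓ⟩ | ⟨hX, hΓ⟩ | ⟨hX, hΓ⟩ <;> simp at hX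
  | @plus2 Γ A B h1 =>
      rcases decomp3 hE.symm with ⟨hX, hΓ⟩ | ⟨hX, hΓ⟩ | ⟨hX, hΓ⟩ <;> simp at hX

/-- ¬⊢ {¬P, P∧Q, ¬Q∧P} -/
lemma notG0 (hPQ : P ≠ Q)
    (h : MpMinus {Fm.neg P, Fm.conj (Fm.pos P) (Fm.pos Q), Fm.conj (Fm.neg Q) (Fm.pos P)}) :
    False := by
  generalize hE : ({Fm.neg P, Fm.conj (Fm.pos P) (Fm.pos Q), Fm.conj (Fm.neg Q) (Fm.pos P)} :
    Multiset Fm) = T at h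
  cases h with
  | ax p =>
      have : Fm.conj (Fm.pos P) (Fm.pos Q) ∈ ({Fm.pos p, Fm.neg p} : Multiset Fm) := by
        rw [← hE]; simp
      simp at this
  | @withR Γ A B h1 h2 =>
      rcases decomp3 hE.symm with ⟨hX, hΓ⟩ | ⟨hX, hΓ⟩ | ⟨hX, hΓ⟩
      · simp at hX
      · injection hX with e1 e2; subst e1; subst e2; subst hΓ
        exact notA1 hPQ h1
      · injection hX with e1 e2; subst e1; subst e2; subst hΓ
        exact notB2 hPQ h2
  | @tensor Δ S A B h1 h2 =>
      rcases decomp3 hE.symm with ⟨hX, hDS⟩ | ⟨hX, hDS⟩ | ⟨hX, hDS⟩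
      · simp at hX
      · -- conj A B = P∧Q, Δ + S = {¬P, ¬Q∧P}
        injection hX with e1 e2; subst e1; subst e2
        rcases split2 hDS with ⟨hΔ, hS⟩ | ⟨hΔ, hS⟩ | ⟨hΔ, hS⟩ | ⟨hΔ, hS⟩
        · subst hΔ
          refine refute (fun _ => false) ?_ h1
          intro A hA; simp at hA
          subst hA; simp [Fm.eval]
        · subst hS
          refine refute (fun _ => false) ?_ h2
          intro A hA; simp at hA
          rcases hA with rfl | rfl <;> simp [Fm.eval]
        · subst hΔ
          refine refute (fun _ => false) ?_ h1
          intro A hA; simp at hA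
          rcases hA with rfl | rfl <;> simp [Fm.eval]
        · subst hΔ
          exact notA1 hPQ h1
      · -- conj A B = ¬Q∧P, Δ + S = {¬P, P∧Q}
        injection hX with e1 e2; subst e1; subst e2
        rcases split2 hDS with ⟨hΔ, hS⟩ | ⟨hΔ, hS⟩ | ⟨hΔ, hS⟩ | ⟨hΔ, hS⟩
        · subst hΔ
          refine refute (fun _ => true) ?_ h1
          intro A hA; simp at hA
          subst hA; simp [Fm.eval]
        · subst hΔ
          refine refute (fun _ => true) ?_ h1
          intro A hA; simp at hA
          rcases hA with rfl | rfl <;> simp [Fm.eval]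
        · subst hΔ
          refine refute (fun n => decide (n = Q)) ?_ h1
          intro A hA; simp at hA
          rcases hA with rfl | rfl <;> simp [Fm.eval, hPQ]
        · subst hS
          refine refute (fun _ => false) ?_ h2
          intro A hA; simp at hA
          subst hA; simp [Fm.eval]
  | @par Γ A B h1 =>
      rcases decomp3 hE.symm with ⟨hX, hΓ⟩ | ⟨hX, hΓ⟩ | ⟨hX, hΓ⟩ <;> simp at hX
  | @plus1 Γ A B h1 =>
      rcases decomp3 hE.symm with ⟨hX, hΓ⟩ | ⟨hX, hΓ⟩ | ⟨hX, hΓ⟩ <;> simp at hX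
  | @plus2 Γ A B h1 =>
      rcases decomp3 hE.symm with ⟨hX, hΓ⟩ | ⟨hX, hΓ⟩ | ⟨hX, hΓ⟩ <;> simp at hX

/-- ¬⊢ {(P∧Q)∨(¬Q∧P), ¬P} -/
lemma notGP (hPQ : P ≠ Q)
    (h : MpMinus {Fm.disj (Fm.conj (Fm.pos P) (Fm.pos Q)) (Fm.conj (Fm.neg Q) (Fm.pos P)),
      Fm.neg P}) : False := by
  generalize hE : ({Fm.disj (Fm.conj (Fm.pos P) (Fm.pos Q)) (Fm.conj (Fm.neg Q) (Fm.pos P)),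
    Fm.neg P} : Multiset Fm) = T at h
  cases h with
  | ax p =>
      have : Fm.disj (Fm.conj (Fm.pos P) (Fm.pos Q)) (Fm.conj (Fm.neg Q) (Fm.pos P)) ∈
          ({Fm.pos p, Fm.neg p} : Multiset Fm) := by
        rw [← hE]; simp
      simp at this
  | @withR Γ A B h1 h2 =>
      rcases decomp2 hE.symm with ⟨hX, hΓ⟩ | ⟨hX, hΓ⟩ <;> simp at hX
  | @tensor Δ S A B h1 h2 =>
      rcases decomp2 hE.symm with ⟨hX, hΓ⟩ | ⟨hX, hΓ⟩ <;> simp at hX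
  | @par Γ A B h1 =>
      rcases decomp2 hE.symm with ⟨hX, hΓ⟩ | ⟨hX, hΓ⟩
      · injection hX with e1 e2; subst e1; subst e2; subst hΓ
        exact notG0 hPQ h1
      · simp at hX
  | @plus1 Γ A B h1 =>
      rcases decomp2 hE.symm with ⟨hX, hΓ⟩ | ⟨hX, hΓ⟩
      · injection hX with e1 e2; subst e1; subst e2; subst hΓ
        refine refute (fun n => decide (n = P)) ?_ h1
        intro A hA; simp at hA
        rcases hA with rfl | rfl <;> simp [Fm.eval, Ne.symm hPQ]
      · simp at hX
  | @plus2 Γ A B h1 =>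
      rcases decomp2 hE.symm with ⟨hX, hΓ⟩ | ⟨hX, hΓ⟩
      · injection hX with e1 e2; subst e1; subst e2; subst hΓ
        refine refute (fun _ => true) ?_ h1
        intro A hA; simp at hA
        rcases hA with rfl | rfl <;> simp [Fm.eval]
      · simp at hX

/-- ¬⊢ {((P∧Q)∨(¬Q∧P))∨¬P} -/
lemma notF (hPQ : P ≠ Q)
    (h : MpMinus ({Fm.disj (Fm.disj (Fm.conj (Fm.pos P) (Fm.pos Q))
      (Fm.conj (Fm.neg Q) (Fm.pos P))) (Fm.neg P)} : Multiset Fm)) : False := by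
  generalize hE : ({Fm.disj (Fm.disj (Fm.conj (Fm.pos P) (Fm.pos Q))
    (Fm.conj (Fm.neg Q) (Fm.pos P))) (Fm.neg P)} : Multiset Fm) = T at h
  cases h with
  | ax p =>
      have := congrArg Multiset.card hE
      simp at this
  | @withR Γ A B h1 h2 =>
      obtain ⟨hX, hΓ⟩ := decomp1 hE.symm
      simp at hX
  | @tensor Δ S A B h1 h2 =>
      obtain ⟨hX, hΓ⟩ := decomp1 hE.symm
      simp at hX
  | @par Γ A B h1 =>
      obtain ⟨hX, hΓ⟩ := decomp1 hE.symm
      injection hX with e1 e2; subst e1; subst e2; subst hΓ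
      exact notGP hPQ h1
  | @plus1 Γ A B h1 =>
      obtain ⟨hX, hΓ⟩ := decomp1 hE.symm
      injection hX with e1 e2; subst e1; subst e2; subst hΓ
      refine refute (fun _ => false) ?_ h1
      intro A hA; simp at hA
      subst hA; simp [Fm.eval]
  | @plus2 Γ A B h1 =>
      obtain ⟨hX, hΓ⟩ := decomp1 hE.symm
      injection hX with e1 e2; subst e1; subst e2; subst hΓ
      refine refute (fun _ => true) ?_ h1
      intro A hA; simp at hA
      subst hA; simp [Fm.eval]

end Main

end Stmt10Aux

theorem stmt_10 (P Q : ℕ) (hPQ : P ≠ Q) :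
    (∀ v : ℕ → Bool,
      (Fm.disj (Fm.disj (Fm.conj (Fm.pos P) (Fm.pos Q)) (Fm.conj (Fm.neg Q) (Fm.pos P)))
        (Fm.neg P)).eval v = true) ∧
    ¬ MpMinus ({Fm.disj (Fm.disj (Fm.conj (Fm.pos P) (Fm.pos Q)) (Fm.conj (Fm.neg Q) (Fm.pos P)))
        (Fm.neg P)} : Multiset Fm) := by
  constructor
  · intro v
    cases hP : v P <;> cases hQ : v Q <;> simp [Fm.eval, hP, hQ]
  · exact Stmt10Aux.notF hPQ
end

section
/- The sequent P, ¬Q∧P, ¬P (with P, Q distinct propositional variables) is not derivable in Mp⁻. -/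
lemma sound {Γ : Multiset Fm} (h : MpMinus Γ) :
    ∀ v : ℕ → Bool, ∃ A ∈ Γ, Fm.eval v A = true := by
  induction h with
  | ax P =>
    intro v
    by_cases hv : v P
    · exact ⟨Fm.pos P, by simp, by simp [Fm.eval, hv]⟩
    · exact ⟨Fm.neg P, by simp, by simp [Fm.eval, hv]⟩
  | @withR Γ A B h1 h2 ih1 ih2 =>
    intro v
    obtain ⟨X, hX, hXv⟩ := ih1 v
    rcases Multiset.mem_add.1 hX with h | h
    · exact ⟨X, Multiset.mem_add.2 (Or.inl h), hXv⟩
    · obtain ⟨Y, hY, hYv⟩ := ih2 v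
      rcases Multiset.mem_add.1 hY with h' | h'
      · exact ⟨Y, Multiset.mem_add.2 (Or.inl h'), hYv⟩
      · rw [Multiset.mem_singleton] at h h'
        subst h; subst h'
        exact ⟨Fm.conj X Y, by simp, by simp [Fm.eval, hXv, hYv]⟩
  | @tensor Δ S A B h1 h2 ih1 ih2 =>
    intro v
    obtain ⟨X, hX, hXv⟩ := ih1 v
    rcases Multiset.mem_add.1 hX with h | h
    · exact ⟨X, Multiset.mem_add.2 (Or.inl (Multiset.mem_add.2 (Or.inl h))), hXv⟩
    · obtain ⟨Y, hY, hYv⟩ := ih2 v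
      rcases Multiset.mem_add.1 hY with h' | h'
      · exact ⟨Y, Multiset.mem_add.2 (Or.inl (Multiset.mem_add.2 (Or.inr h'))), hYv⟩
      · rw [Multiset.mem_singleton] at h h'
        subst h; subst h'
        exact ⟨Fm.conj X Y, by simp, by simp [Fm.eval, hXv, hYv]⟩
  | @par Γ A B h1 ih1 =>
    intro v
    obtain ⟨X, hX, hXv⟩ := ih1 v
    rcases Multiset.mem_add.1 hX with h | h
    · exact ⟨X, Multiset.mem_add.2 (Or.inl h), hXv⟩
    · simp only [Multiset.insert_eq_cons, Multiset.mem_cons, Multiset.mem_singleton] at h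
      rcases h with h | h <;> subst h
      · exact ⟨Fm.disj X B, by simp, by simp [Fm.eval, hXv]⟩
      · exact ⟨Fm.disj A X, by simp, by simp [Fm.eval, hXv]⟩
  | @plus1 Γ A B h1 ih1 =>
    intro v
    obtain ⟨X, hX, hXv⟩ := ih1 v
    rcases Multiset.mem_add.1 hX with h | h
    · exact ⟨X, Multiset.mem_add.2 (Or.inl h), hXv⟩
    · rw [Multiset.mem_singleton] at h; subst h
      exact ⟨Fm.disj X B, by simp, by simp [Fm.eval, hXv]⟩
  | @plus2 Γ A B h1 ih1 =>
    intro v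
    obtain ⟨X, hX, hXv⟩ := ih1 v
    rcases Multiset.mem_add.1 hX with h | h
    · exact ⟨X, Multiset.mem_add.2 (Or.inl h), hXv⟩
    · rw [Multiset.mem_singleton] at h; subst h
      exact ⟨Fm.disj A X, by simp, by simp [Fm.eval, hXv]⟩

/-- A derivable sequent consisting only of atoms must be an axiom. -/
lemma atoms_eq {Γ : Multiset Fm} (h : MpMinus Γ)
    (hat : ∀ A ∈ Γ, (∃ p, A = Fm.pos p) ∨ (∃ p, A = Fm.neg p)) :
    ∃ p, Γ = ({Fm.pos p, Fm.neg p} : Multiset Fm) := by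
  induction h with
  | ax P => exact ⟨P, rfl⟩
  | @withR Γ A B h1 h2 ih1 ih2 =>
    exact absurd (hat (Fm.conj A B) (by simp)) (by simp)
  | @tensor Δ S A B h1 h2 ih1 ih2 =>
    exact absurd (hat (Fm.conj A B) (by simp)) (by simp)
  | @par Γ A B h1 ih1 =>
    exact absurd (hat (Fm.disj A B) (by simp)) (by simp)
  | @plus1 Γ A B h1 ih1 =>
    exact absurd (hat (Fm.disj A B) (by simp)) (by simp)
  | @plus2 Γ A B h1 ih1 =>
    exact absurd (hat (Fm.disj A B) (by simp)) (by simp)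

theorem stmt_12 (P Q : ℕ) (hPQ : P ≠ Q) :
    ¬ MpMinus ({Fm.pos P, Fm.conj (Fm.neg Q) (Fm.pos P), Fm.neg P} : Multiset Fm) := by
  intro h
  generalize hS : ({Fm.pos P, Fm.conj (Fm.neg Q) (Fm.pos P), Fm.neg P} : Multiset Fm) = S at h
  have hperm : ({Fm.pos P, Fm.conj (Fm.neg Q) (Fm.pos P), Fm.neg P} : Multiset Fm)
      = ({Fm.pos P, Fm.neg P} : Multiset Fm) + {Fm.conj (Fm.neg Q) (Fm.pos P)} := by
    simp only [Multiset.insert_eq_cons, ← Multiset.singleton_add, add_assoc]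
    rw [add_comm ({Fm.conj (Fm.neg Q) (Fm.pos P)} : Multiset Fm)]
  cases h with
  | ax P' =>
    have := congrArg Multiset.card hS
    simp [Multiset.insert_eq_cons] at this
  | @withR Γ A B h1 h2 =>
    have hmem : Fm.conj A B ∈ Γ + ({Fm.conj A B} : Multiset Fm) := by simp
    rw [← hS] at hmem
    simp only [Multiset.insert_eq_cons, Multiset.mem_cons, Multiset.mem_singleton] at hmem
    rcases hmem with h | h | h
    · exact absurd h (by simp)
    · obtain ⟨hA, hB⟩ := Fm.conj.inj h
      subst hA; subst hB
      rw [hperm] at hS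
      have hΓ : Γ = ({Fm.pos P, Fm.neg P} : Multiset Fm) := add_right_cancel hS.symm
      subst hΓ
      obtain ⟨p, hp⟩ := atoms_eq h1 (by
        intro X hX
        simp only [Multiset.insert_eq_cons, Multiset.mem_add, Multiset.mem_cons,
          Multiset.mem_singleton] at hX
        rcases hX with (h | h) | h <;> subst h <;> simp)
      have := congrArg Multiset.card hp
      simp [Multiset.insert_eq_cons] at this
    · exact absurd h (by simp)
  | @tensor Δ Sig A B h1 h2 =>
    have hmem : Fm.conj A B ∈ Δ + Sig + ({Fm.conj A B} : Multiset Fm) := by simp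
    rw [← hS] at hmem
    simp only [Multiset.insert_eq_cons, Multiset.mem_cons, Multiset.mem_singleton] at hmem
    rcases hmem with h | h | h
    · exact absurd h (by simp)
    · obtain ⟨hA, hB⟩ := Fm.conj.inj h
      subst hA; subst hB
      rw [hperm] at hS
      have hDS : Δ + Sig = ({Fm.pos P, Fm.neg P} : Multiset Fm) := add_right_cancel hS.symm
      set v : ℕ → Bool := fun n => decide (n ≠ P) with hv
      have hvP : v P = false := by simp [hv]
      have hvQ : v Q = true := by simp [hv]; exact fun h => hPQ h.symm
      have hΔ : Fm.neg P ∈ Δ := by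
        obtain ⟨X, hX, hXv⟩ := sound h1 v
        rcases Multiset.mem_add.1 hX with h | h
        · have hXm : X ∈ Δ + Sig := Multiset.mem_add.2 (Or.inl h)
          rw [hDS] at hXm
          simp only [Multiset.insert_eq_cons, Multiset.mem_cons,
            Multiset.mem_singleton] at hXm
          rcases hXm with h' | h'
          · subst h'; simp [Fm.eval, hvP] at hXv
          · subst h'; exact h
        · rw [Multiset.mem_singleton] at h; subst h
          simp [Fm.eval, hvQ] at hXv
      have hSig : Fm.neg P ∈ Sig := by
        obtain ⟨X, hX, hXv⟩ := sound h2 v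
        rcases Multiset.mem_add.1 hX with h | h
        · have hXm : X ∈ Δ + Sig := Multiset.mem_add.2 (Or.inr h)
          rw [hDS] at hXm
          simp only [Multiset.insert_eq_cons, Multiset.mem_cons,
            Multiset.mem_singleton] at hXm
          rcases hXm with h' | h'
          · subst h'; simp [Fm.eval, hvP] at hXv
          · subst h'; exact h
        · rw [Multiset.mem_singleton] at h; subst h
          simp [Fm.eval, hvP] at hXv
      have hc := congrArg (Multiset.count (Fm.neg P)) hDS
      rw [Multiset.count_add] at hc
      have c1 := Multiset.one_le_count_iff_mem.2 hΔ
      have c2 := Multiset.one_le_count_iff_mem.2 hSig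
      simp [Multiset.insert_eq_cons] at hc
      omega
    · exact absurd h (by simp)
  | @par Γ A B h1 =>
    have hmem : Fm.disj A B ∈ Γ + ({Fm.disj A B} : Multiset Fm) := by simp
    rw [← hS] at hmem
    simp [Multiset.insert_eq_cons] at hmem
  | @plus1 Γ A B h1 =>
    have hmem : Fm.disj A B ∈ Γ + ({Fm.disj A B} : Multiset Fm) := by simp
    rw [← hS] at hmem
    simp [Multiset.insert_eq_cons] at hmem
  | @plus2 Γ A B h1 =>
    have hmem : Fm.disj A B ∈ Γ + ({Fm.disj A B} : Multiset Fm) := by simp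
    rw [← hS] at hmem
    simp [Multiset.insert_eq_cons] at hmem
end

section
/- The blended conjunction rule is derivable in the positive calculus Pp = (⊗, ⊕, C): if Γ,Δ,A and Γ,Σ,B are derivable in Pp, then so is Γ,Δ,Σ,A∧B. -/
/-- Derivability in the positive calculus Pp = (⊗, ⊕, C). -/
inductive Pp : Multiset Fm → Prop
  | ax (P : ℕ) : Pp {Fm.pos P, Fm.neg P}
  | tensor {Δ S : Multiset Fm} {A B : Fm} :
      Pp (Δ + {A}) → Pp (S + {B}) → Pp (Δ + S + {Fm.conj A B})
  | plus1 {Γ : Multiset Fm} {A B : Fm} :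
      Pp (Γ + {A}) → Pp (Γ + {Fm.disj A B})
  | plus2 {Γ : Multiset Fm} {A B : Fm} :
      Pp (Γ + {B}) → Pp (Γ + {Fm.disj A B})
  | contr {Γ : Multiset Fm} {A : Fm} :
      Pp (Γ + {A, A}) → Pp (Γ + {A})

lemma contr_many (G : Multiset Fm) : ∀ X : Multiset Fm, Pp (X + G + G) → Pp (X + G) := by
  induction G using Multiset.induction with
  | empty => simp
  | cons a G ih =>
    intro X h
    have h' : Pp ((X + G + G) + {a, a}) := by
      have : (X + G + G) + ({a, a} : Multiset Fm) = X + (a ::ₘ G) + (a ::ₘ G) := by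
        simp [← Multiset.singleton_add, Multiset.insert_eq_cons]
        abel
      rw [this]; exact h
    have h2 := Pp.contr h'
    have h3 : Pp ((X + {a}) + G + G) := by
      have : (X + {a}) + G + G = (X + G + G) + {a} := by abel
      rw [this]; exact h2
    have h4 := ih (X + {a}) h3
    have : X + (a ::ₘ G) = (X + {a}) + G := by
      simp [← Multiset.singleton_add]; abel
    rw [this]; exact h4

theorem stmt_13 (Γ Δ S : Multiset Fm) (A B : Fm)
    (h₁ : Pp (Γ + Δ + {A})) (h₂ : Pp (Γ + S + {B})) :
    Pp (Γ + Δ + S + {Fm.conj A B}) := by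
  have h := Pp.tensor h₁ h₂
  have e : (Γ + Δ) + (Γ + S) + {Fm.conj A B} = (Δ + S + {Fm.conj A B}) + Γ + Γ := by abel
  rw [e] at h
  have h' := contr_many Γ _ h
  have e2 : Γ + Δ + S + {Fm.conj A B} = (Δ + S + {Fm.conj A B}) + Γ := by abel
  rw [e2]; exact h'
end

section
/- The par rule is derivable in the positive calculus Pp: if Γ,A,B is derivable in Pp, then Γ,A∨B is derivable in Pp. -/
theorem stmt_14 (Γ : Multiset Fm) (A B : Fm) (h : Pp (Γ + {A, B})) :
    Pp (Γ + {Fm.disj A B}) := by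
  apply Pp.contr
  have h1 : Pp ((Γ + {B}) + {A}) := by
    have e : Γ + {A, B} = (Γ + {B}) + {A} := by
      have : ({A, B} : Multiset Fm) = {A} + {B} := rfl
      rw [this]; abel
    rwa [e] at h
  have h2 := Pp.plus1 (B := B) h1
  have h3 : Pp ((Γ + {Fm.disj A B}) + {B}) := by
    have e : (Γ + {B}) + {Fm.disj A B} = (Γ + {Fm.disj A B}) + {B} := by abel
    rwa [e] at h2
  have h4 := Pp.plus2 (A := A) h3
  have e : (Γ + {Fm.disj A B}) + {Fm.disj A B} = Γ + {Fm.disj A B, Fm.disj A B} := by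
    have : ({Fm.disj A B, Fm.disj A B} : Multiset Fm) = {Fm.disj A B} + {Fm.disj A B} := rfl
    rw [this]; abel
  rwa [e] at h4
end

section
/- The blended conjunction rule and the plus rule are derivable in the negative calculus Np = (&, ⅋, W): if Γ,Δ,A and Γ,Σ,B are derivable in Np then so is Γ,Δ,Σ,A∧B; and if Γ,Aᵢ is derivable in Np then so is Γ,A₁∨A₂. Consequently Np contains Mp. -/
/-- Derivability in the negative calculus Np = (&, ⅋, W). -/
inductive Np : Multiset Fm → Prop
  | ax (P : ℕ) : Np {Fm.pos P, Fm.neg P}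
  | withR {Γ : Multiset Fm} {A B : Fm} :
      Np (Γ + {A}) → Np (Γ + {B}) → Np (Γ + {Fm.conj A B})
  | par {Γ : Multiset Fm} {A B : Fm} :
      Np (Γ + {A, B}) → Np (Γ + {Fm.disj A B})
  | weak {Γ : Multiset Fm} (A : Fm) :
      Np Γ → Np (Γ + {A})


lemma Np.weakMany {Γ : Multiset Fm} (Δ : Multiset Fm) (h : Np Γ) : Np (Γ + Δ) := by
  induction Δ using Multiset.induction_on with
  | empty => simpa using h
  | cons a s ih =>
      have : Γ + (a ::ₘ s) = (Γ + s) + {a} := by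
        rw [Multiset.add_cons]; exact (Multiset.singleton_add a (Γ+s)).symm.trans (add_comm _ _)
      rw [this]
      exact Np.weak a ih

lemma Np.blend {Γ Δ S : Multiset Fm} {A B : Fm}
    (h1 : Np (Γ + Δ + {A})) (h2 : Np (Γ + S + {B})) :
    Np (Γ + Δ + S + {Fm.conj A B}) := by
  have hA : Np (Γ + Δ + S + {A}) := by
    have := Np.weakMany S h1
    have e : Γ + Δ + {A} + S = Γ + Δ + S + {A} := by ac_rfl
    rwa [e] at this
  have hB : Np (Γ + Δ + S + {B}) := by
    have := Np.weakMany Δ h2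
    have e : Γ + S + {B} + Δ = Γ + Δ + S + {B} := by ac_rfl
    rwa [e] at this
  exact Np.withR hA hB

lemma Np.plus1 {Γ : Multiset Fm} {A B : Fm} (h : Np (Γ + {A})) :
    Np (Γ + {Fm.disj A B}) := by
  apply Np.par
  have : Γ + {A, B} = (Γ + {A}) + {B} := by
    rw [add_assoc]; rfl
  rw [this]
  exact Np.weak B h

lemma Np.plus2 {Γ : Multiset Fm} {A B : Fm} (h : Np (Γ + {B})) :
    Np (Γ + {Fm.disj A B}) := by
  apply Np.par
  have : Γ + {A, B} = (Γ + {B}) + {A} := by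
    have e : ({A, B} : Multiset Fm) = {B} + {A} := by
      exact Multiset.cons_swap A B {}
    rw [e, ← add_assoc]
  rw [this]
  exact Np.weak A h

theorem stmt_15 :
    (∀ (Γ Δ S : Multiset Fm) (A B : Fm),
      Np (Γ + Δ + {A}) → Np (Γ + S + {B}) → Np (Γ + Δ + S + {Fm.conj A B})) ∧
    (∀ (Γ : Multiset Fm) (A B : Fm),
      (Np (Γ + {A}) → Np (Γ + {Fm.disj A B})) ∧ (Np (Γ + {B}) → Np (Γ + {Fm.disj A B}))) ∧
    (∀ Γ : Multiset Fm, Mp Γ → Np Γ) := by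
  refine ⟨fun Γ Δ S A B h1 h2 => Np.blend h1 h2,
    fun Γ A B => ⟨Np.plus1, Np.plus2⟩, fun Γ h => ?_⟩
  induction h with
  | ax P => exact Np.ax P
  | blend _ _ ih1 ih2 => exact Np.blend ih1 ih2
  | par _ ih => exact Np.par ih
  | plus1 _ ih => exact Np.plus1 ih
  | plus2 _ ih => exact Np.plus2 ih
end

section
/- In any extended system without the ⊕ (plus) rule and without weakening — i.e., any system whose rules are among axiom P,¬P, context-sharing conjunction &, context-splitting conjunction ⊗, blended conjunction ∧, par ⅋, and contraction C — the valid formula (P∨¬P)∨Q (P, Q distinct variables) is not derivable. -/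
/-- The largest extended system without the plus rule ⊕ and without weakening W:
rules axiom, &, ⊗, blended ∧, ⅋, C.  Any system whose rules are among these
derives only sequents derivable here. -/
inductive Sys16 : Multiset Fm → Prop
  | ax (P : ℕ) : Sys16 {Fm.pos P, Fm.neg P}
  | withR {Γ : Multiset Fm} {A B : Fm} :
      Sys16 (Γ + {A}) → Sys16 (Γ + {B}) → Sys16 (Γ + {Fm.conj A B})
  | tensor {Δ S : Multiset Fm} {A B : Fm} :
      Sys16 (Δ + {A}) → Sys16 (S + {B}) → Sys16 (Δ + S + {Fm.conj A B})
  | blend {Γ Δ S : Multiset Fm} {A B : Fm} :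
      Sys16 (Γ + Δ + {A}) → Sys16 (Γ + S + {B}) → Sys16 (Γ + Δ + S + {Fm.conj A B})
  | par {Γ : Multiset Fm} {A B : Fm} :
      Sys16 (Γ + {A, B}) → Sys16 (Γ + {Fm.disj A B})
  | contr {Γ : Multiset Fm} {A : Fm} :
      Sys16 (Γ + {A, A}) → Sys16 (Γ + {A})


def posv : Fm → Finset ℕ
  | .pos p => {p}
  | .neg _ => ∅
  | .conj a b => posv a ∪ posv b
  | .disj a b => posv a ∪ posv b

def negv : Fm → Finset ℕ
  | .pos _ => ∅
  | .neg p => {p}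
  | .conj a b => negv a ∪ negv b
  | .disj a b => negv a ∪ negv b

def mpos (Γ : Multiset Fm) : Finset ℕ := (Γ.map posv).sup
def mneg (Γ : Multiset Fm) : Finset ℕ := (Γ.map negv).sup

@[simp] lemma mpos_zero : mpos 0 = ∅ := rfl
@[simp] lemma mneg_zero : mneg 0 = ∅ := rfl
@[simp] lemma mpos_cons (A : Fm) (Γ : Multiset Fm) : mpos (A ::ₘ Γ) = posv A ∪ mpos Γ := by
  simp [mpos]
@[simp] lemma mneg_cons (A : Fm) (Γ : Multiset Fm) : mneg (A ::ₘ Γ) = negv A ∪ mneg Γ := by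
  simp [mneg]
@[simp] lemma mpos_add (Γ Δ : Multiset Fm) : mpos (Γ + Δ) = mpos Γ ∪ mpos Δ := by
  simp [mpos, Multiset.sup_add]
@[simp] lemma mneg_add (Γ Δ : Multiset Fm) : mneg (Γ + Δ) = mneg Γ ∪ mneg Δ := by
  simp [mneg, Multiset.sup_add]

@[simp] lemma mpos_single (A : Fm) : mpos {A} = posv A := by simp [mpos]
@[simp] lemma mneg_single (A : Fm) : mneg {A} = negv A := by simp [mneg]

lemma union_sh (g pa pb : Finset ℕ) : g ∪ (pa ∪ pb) = (g ∪ pa) ∪ (g ∪ pb) := by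
  ext x; simp; tauto

lemma union_sp (d s pa pb : Finset ℕ) : d ∪ s ∪ (pa ∪ pb) = (d ∪ pa) ∪ (s ∪ pb) := by
  ext x; simp; tauto

lemma union_bl (g d s pa pb : Finset ℕ) :
    g ∪ d ∪ s ∪ (pa ∪ pb) = (g ∪ d ∪ pa) ∪ (g ∪ s ∪ pb) := by
  ext x; simp; tauto

lemma inv {Γ : Multiset Fm} (h : Sys16 Γ) : mpos Γ = mneg Γ := by
  induction h with
  | ax P => ext x; simp [Multiset.insert_eq_cons, posv, negv]
  | withR _ _ ih1 ih2 =>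
      simp only [mpos_add, mneg_add, mpos_single, mneg_single, posv, negv] at *
      calc _ = (mpos _ ∪ posv _) ∪ (mpos _ ∪ posv _) := union_sh _ _ _
        _ = (mneg _ ∪ negv _) ∪ (mneg _ ∪ negv _) := by rw [ih1, ih2]
        _ = _ := (union_sh _ _ _).symm
  | tensor _ _ ih1 ih2 =>
      simp only [mpos_add, mneg_add, mpos_single, mneg_single, posv, negv] at *
      calc _ = (mpos _ ∪ posv _) ∪ (mpos _ ∪ posv _) := union_sp _ _ _ _
        _ = (mneg _ ∪ negv _) ∪ (mneg _ ∪ negv _) := by rw [ih1, ih2]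
        _ = _ := (union_sp _ _ _ _).symm
  | blend _ _ ih1 ih2 =>
      simp only [mpos_add, mneg_add, mpos_single, mneg_single, posv, negv] at *
      calc _ = (mpos _ ∪ mpos _ ∪ posv _) ∪ (mpos _ ∪ mpos _ ∪ posv _) := union_bl _ _ _ _ _
        _ = (mneg _ ∪ mneg _ ∪ negv _) ∪ (mneg _ ∪ mneg _ ∪ negv _) := by rw [ih1, ih2]
        _ = _ := (union_bl _ _ _ _ _).symm
  | par _ ih =>
      simp only [Multiset.insert_eq_cons, mpos_add, mneg_add, mpos_single, mneg_single,
        mpos_cons, mneg_cons, mpos_zero, mneg_zero, posv, negv, Finset.union_empty] at *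
      exact ih
  | contr _ ih =>
      simp only [Multiset.insert_eq_cons, mpos_add, mneg_add, mpos_single, mneg_single,
        mpos_cons, mneg_cons, mpos_zero, mneg_zero, posv, negv, Finset.union_empty,
        Finset.union_self, ← Finset.union_assoc] at *
      exact ih

theorem stmt_16 (P Q : ℕ) (hPQ : P ≠ Q) :
    (∀ v : ℕ → Bool,
      (Fm.disj (Fm.disj (Fm.pos P) (Fm.neg P)) (Fm.pos Q)).eval v = true) ∧
    ¬ Sys16 ({Fm.disj (Fm.disj (Fm.pos P) (Fm.neg P)) (Fm.pos Q)} : Multiset Fm) := by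
  constructor
  · intro v
    cases hv : v P <;> simp [Fm.eval, hv]
  · intro h
    have hinv := inv h
    have hQ : Q ∈ mpos ({Fm.disj (Fm.disj (Fm.pos P) (Fm.neg P)) (Fm.pos Q)} : Multiset Fm) := by
      simp [posv]
    rw [hinv] at hQ
    simp [negv] at hQ
    exact hPQ hQ.symm
end

section
/- The valid formula P∨(¬P∧¬P) is not derivable in the system with rules: axiom P,¬P, context-splitting conjunction ⊗, plus ⊕, par ⅋, and weakening W (i.e., the standard system without contraction and without the context-sharing conjunction &). -/
/-- The standard system without contraction and without &: rules axiom, ⊗, ⊕, ⅋, W. -/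
inductive Sys18 : Multiset Fm → Prop
  | ax (P : ℕ) : Sys18 {Fm.pos P, Fm.neg P}
  | tensor {Δ S : Multiset Fm} {A B : Fm} :
      Sys18 (Δ + {A}) → Sys18 (S + {B}) → Sys18 (Δ + S + {Fm.conj A B})
  | plus1 {Γ : Multiset Fm} {A B : Fm} :
      Sys18 (Γ + {A}) → Sys18 (Γ + {Fm.disj A B})
  | plus2 {Γ : Multiset Fm} {A B : Fm} :
      Sys18 (Γ + {B}) → Sys18 (Γ + {Fm.disj A B})
  | par {Γ : Multiset Fm} {A B : Fm} :
      Sys18 (Γ + {A, B}) → Sys18 (Γ + {Fm.disj A B})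
  | weak {Γ : Multiset Fm} (A : Fm) :
      Sys18 Γ → Sys18 (Γ + {A})


lemma sys18_sound {G : Multiset Fm} (h : Sys18 G) : Valid G := by
  induction h with
  | ax P =>
      refine ⟨by simp, fun v => ?_⟩
      cases hv : v P
      · exact ⟨Fm.neg P, by simp, by simp [Fm.eval, hv]⟩
      · exact ⟨Fm.pos P, by simp, by simp [Fm.eval, hv]⟩
  | tensor h1 h2 ih1 ih2 =>
      rename_i D S A B
      refine ⟨by simp, fun v => ?_⟩
      obtain ⟨C, hC, hCe⟩ := ih1.2 v
      rcases Multiset.mem_add.1 hC with hC | hC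
      · exact ⟨C, by simp [Multiset.mem_add, hC], hCe⟩
      · obtain ⟨E, hE, hEe⟩ := ih2.2 v
        rcases Multiset.mem_add.1 hE with hE | hE
        · exact ⟨E, by simp [Multiset.mem_add, hE], hEe⟩
        · simp at hC hE
          rw [hC] at hCe; rw [hE] at hEe
          exact ⟨Fm.conj A B, by simp, by simp [Fm.eval, hCe, hEe]⟩
  | plus1 h ih =>
      rename_i G A B
      refine ⟨by simp, fun v => ?_⟩
      obtain ⟨C, hC, hCe⟩ := ih.2 v
      rcases Multiset.mem_add.1 hC with hC | hC
      · exact ⟨C, by simp [Multiset.mem_add, hC], hCe⟩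
      · simp at hC; rw [hC] at hCe
        exact ⟨Fm.disj A B, by simp, by simp [Fm.eval, hCe]⟩
  | plus2 h ih =>
      rename_i G A B
      refine ⟨by simp, fun v => ?_⟩
      obtain ⟨C, hC, hCe⟩ := ih.2 v
      rcases Multiset.mem_add.1 hC with hC | hC
      · exact ⟨C, by simp [Multiset.mem_add, hC], hCe⟩
      · simp at hC; rw [hC] at hCe
        exact ⟨Fm.disj A B, by simp, by simp [Fm.eval, hCe]⟩
  | par h ih =>
      rename_i G A B
      refine ⟨by simp, fun v => ?_⟩
      obtain ⟨C, hC, hCe⟩ := ih.2 v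
      rcases Multiset.mem_add.1 hC with hC | hC
      · exact ⟨C, by simp [Multiset.mem_add, hC], hCe⟩
      · simp at hC
        rcases hC with hC | hC <;> rw [hC] at hCe
        · exact ⟨Fm.disj A B, by simp, by simp [Fm.eval, hCe]⟩
        · exact ⟨Fm.disj A B, by simp, by simp [Fm.eval, hCe]⟩
  | weak A h ih =>
      refine ⟨by simp, fun v => ?_⟩
      obtain ⟨C, hC, hCe⟩ := ih.2 v
      exact ⟨C, by simp [Multiset.mem_add, hC], hCe⟩

lemma sys18_ne_zero {G : Multiset Fm} (h : Sys18 G) : G ≠ 0 := (sys18_sound h).1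

lemma not_sys18_pos (P : ℕ) : ¬ Sys18 ({Fm.pos P} : Multiset Fm) := by
  intro h
  obtain ⟨A, hA, hAe⟩ := (sys18_sound h).2 (fun _ => false)
  simp at hA; subst hA; simp [Fm.eval] at hAe

lemma not_sys18_neg (P : ℕ) : ¬ Sys18 ({Fm.neg P} : Multiset Fm) := by
  intro h
  obtain ⟨A, hA, hAe⟩ := (sys18_sound h).2 (fun _ => true)
  simp at hA; subst hA; simp [Fm.eval] at hAe

lemma not_sys18_conj (P : ℕ) :
    ¬ Sys18 ({Fm.conj (Fm.neg P) (Fm.neg P)} : Multiset Fm) := by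
  intro h
  obtain ⟨A, hA, hAe⟩ := (sys18_sound h).2 (fun _ => true)
  simp at hA; subst hA; simp [Fm.eval] at hAe

lemma eq_of_add_singleton {G D : Multiset Fm} {A : Fm}
    (h : G + {A} = D) : G = D.erase A := by
  have h2 : A ::ₘ G = D := by rw [← h, add_comm, Multiset.singleton_add]
  have := congrArg (fun m => Multiset.erase m A) h2
  simpa using this

lemma not_sys18_pair (P : ℕ) :
    ¬ Sys18 ({Fm.pos P, Fm.conj (Fm.neg P) (Fm.neg P)} : Multiset Fm) := by
  intro h
  generalize hM : ({Fm.pos P, Fm.conj (Fm.neg P) (Fm.neg P)} : Multiset Fm) = M at h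
  cases h with
  | ax Q =>
      have : Fm.conj (Fm.neg P) (Fm.neg P) ∈ ({Fm.pos Q, Fm.neg Q} : Multiset Fm) := by
        rw [← hM]; simp
      simp at this
  | tensor h1 h2 =>
      rename_i D S A B
      have hmem : Fm.conj A B ∈ ({Fm.pos P, Fm.conj (Fm.neg P) (Fm.neg P)} : Multiset Fm) := by
        rw [hM]; simp
      simp at hmem
      obtain ⟨hA, hB⟩ := hmem
      subst hA; subst hB
      have hDS : D + S = ({Fm.pos P} : Multiset Fm) := by
        have := eq_of_add_singleton hM.symm
        simpa [Multiset.erase_cons_tail, Multiset.erase_cons_head] using this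
      have hcard : Multiset.card D + Multiset.card S = 1 := by
        have := congrArg Multiset.card hDS
        simpa using this
      rcases Nat.add_eq_one_iff.1 hcard with ⟨hD, _⟩ | ⟨_, hS⟩
      · have hD0 : D = 0 := Multiset.card_eq_zero.1 hD
        rw [hD0, zero_add] at h1
        exact not_sys18_neg P h1
      · have hS0 : S = 0 := Multiset.card_eq_zero.1 hS
        rw [hS0, zero_add] at h2
        exact not_sys18_neg P h2
  | plus1 h1 =>
      rename_i G A B
      have hmem : Fm.disj A B ∈ ({Fm.pos P, Fm.conj (Fm.neg P) (Fm.neg P)} : Multiset Fm) := by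
        rw [hM]; simp
      simp at hmem
  | plus2 h1 =>
      rename_i G A B
      have hmem : Fm.disj A B ∈ ({Fm.pos P, Fm.conj (Fm.neg P) (Fm.neg P)} : Multiset Fm) := by
        rw [hM]; simp
      simp at hmem
  | par h1 =>
      rename_i G A B
      have hmem : Fm.disj A B ∈ ({Fm.pos P, Fm.conj (Fm.neg P) (Fm.neg P)} : Multiset Fm) := by
        rw [hM]; simp
      simp at hmem
  | weak A h1 =>
      rename_i G
      have hmem : A ∈ ({Fm.pos P, Fm.conj (Fm.neg P) (Fm.neg P)} : Multiset Fm) := by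
        rw [hM]; simp
      simp at hmem
      rcases hmem with hA | hA <;> subst hA
      · have hG : G = ({Fm.conj (Fm.neg P) (Fm.neg P)} : Multiset Fm) := by
          have := eq_of_add_singleton hM.symm
          simpa [Multiset.erase_cons_head] using this
        rw [hG] at h1
        exact not_sys18_conj P h1
      · have hG : G = ({Fm.pos P} : Multiset Fm) := by
          have := eq_of_add_singleton hM.symm
          simpa [Multiset.erase_cons_tail, Multiset.erase_cons_head] using this
        rw [hG] at h1
        exact not_sys18_pos P h1

theorem stmt_18 (P : ℕ) :
    (∀ v : ℕ → Bool,
      (Fm.disj (Fm.pos P) (Fm.conj (Fm.neg P) (Fm.neg P))).eval v = true) ∧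
    ¬ Sys18 ({Fm.disj (Fm.pos P) (Fm.conj (Fm.neg P) (Fm.neg P))} : Multiset Fm) := by
  constructor
  · intro v; cases hv : v P <;> simp [Fm.eval, hv]
  · intro h
    generalize hM : ({Fm.disj (Fm.pos P) (Fm.conj (Fm.neg P) (Fm.neg P))} : Multiset Fm) = M at h
    cases h with
    | ax Q =>
        have : Fm.disj (Fm.pos P) (Fm.conj (Fm.neg P) (Fm.neg P)) ∈
            ({Fm.pos Q, Fm.neg Q} : Multiset Fm) := by rw [← hM]; simp
        simp at this
    | tensor h1 h2 =>
        rename_i D S A B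
        have hmem : Fm.conj A B ∈
            ({Fm.disj (Fm.pos P) (Fm.conj (Fm.neg P) (Fm.neg P))} : Multiset Fm) := by
          rw [hM]; simp
        simp at hmem
    | plus1 h1 =>
        rename_i G A B
        have hmem : Fm.disj A B ∈
            ({Fm.disj (Fm.pos P) (Fm.conj (Fm.neg P) (Fm.neg P))} : Multiset Fm) := by
          rw [hM]; simp
        simp at hmem
        obtain ⟨hA, hB⟩ := hmem
        subst hA; subst hB
        have hG : G = 0 := by
          have := eq_of_add_singleton hM.symm
          simpa [Multiset.erase_cons_head] using this
        rw [hG, zero_add] at h1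
        exact not_sys18_pos P h1
    | plus2 h1 =>
        rename_i G A B
        have hmem : Fm.disj A B ∈
            ({Fm.disj (Fm.pos P) (Fm.conj (Fm.neg P) (Fm.neg P))} : Multiset Fm) := by
          rw [hM]; simp
        simp at hmem
        obtain ⟨hA, hB⟩ := hmem
        subst hA; subst hB
        have hG : G = 0 := by
          have := eq_of_add_singleton hM.symm
          simpa [Multiset.erase_cons_head] using this
        rw [hG, zero_add] at h1
        exact not_sys18_conj P h1
    | par h1 =>
        rename_i G A B
        have hmem : Fm.disj A B ∈
            ({Fm.disj (Fm.pos P) (Fm.conj (Fm.neg P) (Fm.neg P))} : Multiset Fm) := by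
          rw [hM]; simp
        simp at hmem
        obtain ⟨hA, hB⟩ := hmem
        subst hA; subst hB
        have hG : G = 0 := by
          have := eq_of_add_singleton hM.symm
          simpa [Multiset.erase_cons_head] using this
        rw [hG, zero_add] at h1
        exact not_sys18_pair P h1
    | weak A h1 =>
        rename_i G
        have hmem : A ∈
            ({Fm.disj (Fm.pos P) (Fm.conj (Fm.neg P) (Fm.neg P))} : Multiset Fm) := by
          rw [hM]; simp
        simp at hmem
        subst hmem
        have hG : G = 0 := by
          have := eq_of_add_singleton hM.symm
          simpa [Multiset.erase_cons_head] using this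
        rw [hG] at h1
        exact sys18_ne_zero h1 rfl
end

section
/- The valid sequent P, ¬P, Q (P, Q distinct propositional variables) is not derivable in the positive calculus Pp = (⊗, ⊕, C); hence Pp (and therefore its subsystem Mp) is not sequent-complete. -/
def FmAtom : Fm → Prop
  | .pos _ => True
  | .neg _ => True
  | _ => False

lemma pp_atomic {Γ : Multiset Fm} (h : Pp Γ) (ha : ∀ A ∈ Γ, FmAtom A) :
    ∃ P, Γ = ({Fm.pos P, Fm.neg P} : Multiset Fm) := by
  induction h with
  | ax P => exact ⟨P, rfl⟩
  | @tensor D S A B h1 h2 ih1 ih2 =>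
    exact absurd (ha (Fm.conj A B) (by simp)) (by simp [FmAtom])
  | @plus1 G A B h ih => exact absurd (ha (Fm.disj A B) (by simp)) (by simp [FmAtom])
  | @plus2 G A B h ih => exact absurd (ha (Fm.disj A B) (by simp)) (by simp [FmAtom])
  | @contr Γ A h ih =>
    have ha' : ∀ B ∈ Γ + ({A, A} : Multiset Fm), FmAtom B := by
      intro B hB
      rw [Multiset.mem_add] at hB
      rcases hB with hB | hB
      · exact ha B (by simp [hB])
      · simp only [Multiset.insert_eq_cons, Multiset.mem_cons, Multiset.mem_singleton] at hB
        rcases hB with rfl | rfl <;> exact ha B (by simp)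
    obtain ⟨P, hP⟩ := ih ha'
    exfalso
    have hcA : Multiset.count A (Γ + ({A, A} : Multiset Fm)) = Multiset.count A Γ + 2 := by
      simp
    rw [hP] at hcA
    have h1 : Multiset.count A ({Fm.pos P, Fm.neg P} : Multiset Fm) ≤ 1 := by
      by_cases h : A = Fm.pos P
      · subst h; simp
      · by_cases h2 : A = Fm.neg P
        · subst h2; simp
        · simp [Multiset.count_cons, h, h2]
    omega

lemma mp_atomic {Γ : Multiset Fm} (h : Mp Γ) (ha : ∀ A ∈ Γ, FmAtom A) :
    ∃ P, Γ = ({Fm.pos P, Fm.neg P} : Multiset Fm) := by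
  induction h with
  | ax P => exact ⟨P, rfl⟩
  | @blend G D S A B h1 h2 ih1 ih2 =>
    exact absurd (ha (Fm.conj A B) (by simp)) (by simp [FmAtom])
  | @par G A B h ih => exact absurd (ha (Fm.disj A B) (by simp)) (by simp [FmAtom])
  | @plus1 G A B h ih => exact absurd (ha (Fm.disj A B) (by simp)) (by simp [FmAtom])
  | @plus2 G A B h ih => exact absurd (ha (Fm.disj A B) (by simp)) (by simp [FmAtom])

theorem stmt_19 (P Q : ℕ) (hPQ : P ≠ Q) :
    Valid ({Fm.pos P, Fm.neg P, Fm.pos Q} : Multiset Fm) ∧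
    ¬ Pp ({Fm.pos P, Fm.neg P, Fm.pos Q} : Multiset Fm) ∧
    ¬ Mp ({Fm.pos P, Fm.neg P, Fm.pos Q} : Multiset Fm) := by
  have hatom : ∀ A ∈ ({Fm.pos P, Fm.neg P, Fm.pos Q} : Multiset Fm), FmAtom A := by
    intro A hA
    simp only [Multiset.insert_eq_cons, Multiset.mem_cons, Multiset.mem_singleton] at hA
    rcases hA with rfl | rfl | rfl <;> trivial
  have hcard : Multiset.card ({Fm.pos P, Fm.neg P, Fm.pos Q} : Multiset Fm) = 3 := rfl
  refine ⟨⟨by simp, ?_⟩, ?_, ?_⟩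
  · intro v
    by_cases hv : v P
    · exact ⟨Fm.pos P, by simp, by simp [Fm.eval, hv]⟩
    · exact ⟨Fm.neg P, by simp, by simp [Fm.eval, hv]⟩
  · intro h
    obtain ⟨R, hR⟩ := pp_atomic h hatom
    have := congrArg Multiset.card hR
    simp at this
  · intro h
    obtain ⟨R, hR⟩ := mp_atomic h hatom
    have := congrArg Multiset.card hR
    simp at this
end
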